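/- Average entropy after an inefficient measurement exceeds the input entropy by at most the log-inefficiency: for a quantum instrument {T_k} with Kraus decompositions T_k(ρ) = ∑_{i=1}^{I(k)} M_{ki} ρ M_{ki}†, max_k I(k) ≤ I, and ∑_{k,i} M_{ki}† M_{ki} = 𝟙, one has ∑_k p_k S(ρ'_{S,k}) ≤ ln I + S(ρ_S), where p_k = tr[∑_i M_{ki} ρ_S M_{ki}†] and ρ'_{S,k} = ∑_i M_{ki} ρ_S M_{ki}† / p_k (sum over k with p_k > 0). -/

import Mathlib

/-!
Write `ρ = A Aᴴ` with `Aᴴ A = diag(λ)`, `λ` the eigenvalues of `ρ`. With `N_{ki} = M_{ki} A`, the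
unnormalised outcome state `∑ᵢ M_{ki} ρ M_{ki}ᴴ = ∑ᵢ N_{ki} N_{ki}ᴴ` is `B_k B_kᴴ` for the block row
`B_k = [N_{k1} | ⋯ | N_{kI(k)}]`, and the entropy of `B Bᴴ` is at most the Shannon entropy of the
squared column norms of `B` (Bessel's inequality plus Jensen). The squared column norms
`q(k, i, r) = ‖N_{ki} e_r‖²` form a probability distribution whose marginal on `r` is `λ`, because
`∑ M_{ki}ᴴ M_{ki} = 1`. The theorem thus reduces to the classical inequality
`H(I, R | K) ≤ log I + H(R)`, which follows from `H(I | K, R) ≤ log I` and `H(R | K) ≤ H(R)`.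
-/

open scoped ComplexOrder

/-- Von Neumann entropy `S(A) = -tr[A ln A]`, via eigenvalues of a Hermitian matrix
(convention `0 ln 0 = 0`), junk value `0` on non-Hermitian matrices. -/
noncomputable def vNEntropy {n : Type*} [Fintype n] [DecidableEq n]
    (A : Matrix n n ℂ) : ℝ :=
  if h : A.IsHermitian then ∑ i, Real.negMulLog (h.eigenvalues i) else 0

open Matrix
open scoped Classical

namespace Real

open Finset

lemma sum_mul_negMulLog_le_negMulLog_sum {ι : Type*} (s : Finset ι) {w x : ι → ℝ}
    (hw : ∀ i ∈ s, 0 ≤ w i) (hx : ∀ i ∈ s, 0 ≤ x i) (hw₁ : ∑ i ∈ s, w i ≤ 1) :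
    ∑ i ∈ s, w i * negMulLog (x i) ≤ negMulLog (∑ i ∈ s, w i * x i) := by
  -- Jensen, with the missing mass `1 - ∑ w` placed at `0`, where `negMulLog` vanishes.
  simpa [smul_eq_mul] using concaveOn_negMulLog.map_add_sum_le (t := s) (w := w) (p := x)
    (v := 1 - ∑ i ∈ s, w i) (q := 0) hw (by ring) hx (by linarith) Set.self_mem_Ici

lemma sum_negMulLog_le_negMulLog_sum_add_mul_log {ι : Type*} {s : Finset ι} {I : ℕ}
    (hs : s.card ≤ I) {x : ι → ℝ} (hx : ∀ i ∈ s, 0 ≤ x i) :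
    ∑ i ∈ s, negMulLog (x i) ≤ negMulLog (∑ i ∈ s, x i) + (∑ i ∈ s, x i) * log I := by
  rcases s.eq_empty_or_nonempty with rfl | hne
  · simp
  have hm : (0 : ℝ) < s.card := by exact_mod_cast hne.card_pos
  have h := sum_mul_negMulLog_le_negMulLog_sum s (w := fun _ => (s.card : ℝ)⁻¹)
    (fun _ _ => by positivity) hx (by simp [hm.ne'])
  rw [← mul_sum, ← mul_sum, negMulLog_mul, negMulLog, log_inv] at h
  have hlog : log s.card ≤ log I := log_le_log hm (by exact_mod_cast hs)
  have := mul_le_mul_of_nonneg_left h hm.le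
  field_simp at this
  nlinarith [sum_nonneg hx]

lemma mul_sum_negMulLog_div_le {ι : Type*} {s : Finset ι} {I : ℕ} (hs : s.card ≤ I) {p : ℝ}
    {q : ι → ℝ} (hp : 0 ≤ p) (hq : ∀ i ∈ s, 0 ≤ q i) :
    p * ∑ i ∈ s, negMulLog (q i / p)
      ≤ p * negMulLog ((∑ i ∈ s, q i) / p) + (∑ i ∈ s, q i) * log I := by
  rcases hp.eq_or_lt with rfl | hp
  · simpa using mul_nonneg (sum_nonneg hq) (log_natCast_nonneg I)
  have h := sum_negMulLog_le_negMulLog_sum_add_mul_log hs (x := fun i => q i / p)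
    fun i hi => div_nonneg (hq i hi) hp.le
  rw [← sum_div] at h
  calc p * ∑ i ∈ s, negMulLog (q i / p)
      ≤ p * (negMulLog ((∑ i ∈ s, q i) / p) + (∑ i ∈ s, q i) / p * log I) :=
        mul_le_mul_of_nonneg_left h hp.le
    _ = _ := by field_simp

lemma sum_mul_negMulLog_div_le_negMulLog_sum {ι : Type*} (s : Finset ι) {p t : ι → ℝ}
    (hp : ∀ i ∈ s, 0 ≤ p i) (ht : ∀ i ∈ s, 0 ≤ t i) (hpt : ∀ i ∈ s, p i = 0 → t i = 0)
    (hp₁ : ∑ i ∈ s, p i ≤ 1) :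
    ∑ i ∈ s, p i * negMulLog (t i / p i) ≤ negMulLog (∑ i ∈ s, t i) := by
  have hcancel : ∀ i ∈ s, p i * (t i / p i) = t i := fun i hi => by
    rcases (hp i hi).eq_or_lt with h | h
    · simp [← h, hpt i hi h.symm]
    · field_simp
  rw [← sum_congr rfl hcancel]
  exact sum_mul_negMulLog_le_negMulLog_sum s hp (fun i hi => div_nonneg (ht i hi) (hp i hi)) hp₁

lemma sum_negMulLog_le_sum_negMulLog_colSum {ι κ : Type*} [Fintype ι] [Fintype κ]
    (X : ι → κ → ℝ) (d : ι → ℝ) (hX : ∀ i c, 0 ≤ X i c) (hrow : ∀ i, ∑ c, X i c = d i)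
    (hcol : ∀ c, ∑ i, X i c / d i ≤ 1) :
    ∑ i, negMulLog (d i) ≤ ∑ c, negMulLog (∑ i, X i c) := by
  have hd : ∀ i, 0 ≤ d i := fun i => hrow i ▸ sum_nonneg fun c _ => hX i c
  have hX₀ : ∀ i c, d i = 0 → X i c = 0 := fun i c h =>
    (sum_eq_zero_iff_of_nonneg fun c _ => hX i c).1 (h ▸ hrow i) c (mem_univ c)
  calc ∑ i, negMulLog (d i) = ∑ i, ∑ c, X i c / d i * negMulLog (d i) := by
        refine sum_congr rfl fun i _ => ?_
        rcases (hd i).eq_or_lt with h | h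
        · simp [← h]
        · rw [← sum_mul, ← sum_div, hrow i, div_self h.ne', one_mul]
    _ = ∑ c, ∑ i, X i c / d i * negMulLog (d i) := sum_comm
    _ ≤ ∑ c, negMulLog (∑ i, X i c / d i * d i) := sum_le_sum fun c _ =>
        sum_mul_negMulLog_le_negMulLog_sum _ (fun i _ => div_nonneg (hX i c) (hd i))
          (fun i _ => hd i) (hcol c)
    _ = ∑ c, negMulLog (∑ i, X i c) := by
        refine sum_congr rfl fun c _ => congrArg _ (sum_congr rfl fun i _ => ?_)
        rcases (hd i).eq_or_lt with h | h
        · simp [hX₀ i c h.symm]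
        · field_simp

/-- The classical version of the theorem: `∑ₖ pₖ H(A, R | K = k) ≤ log I + H(R)` for a
sub-probability distribution `q` on triples `(k, a, r)` with at most `I` values of `a` per `k`. -/
theorem sum_mul_sum_negMulLog_div_le_log_add {κ ν : Type*} [Fintype κ] [Fintype ν]
    {α : κ → Type*} [∀ k, Fintype (α k)] {I : ℕ} (hα : ∀ k, Fintype.card (α k) ≤ I)
    (q : (k : κ) → α k → ν → ℝ) (hq : ∀ k a r, 0 ≤ q k a r)
    (p : κ → ℝ) (hp : ∀ k, p k = ∑ a, ∑ r, q k a r) (hp₁ : ∑ k, p k ≤ 1) :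
    ∑ k, p k * ∑ a, ∑ r, negMulLog (q k a r / p k)
      ≤ log I + ∑ r, negMulLog (∑ k, ∑ a, q k a r) := by
  set t : κ → ν → ℝ := fun k r => ∑ a, q k a r
  have ht₀ : ∀ k r, 0 ≤ t k r := fun k r => sum_nonneg fun a _ => hq k a r
  have hpt : ∀ k, p k = ∑ r, t k r := fun k => (hp k).trans sum_comm
  have hp₀ : ∀ k, 0 ≤ p k := fun k => hpt k ▸ sum_nonneg fun r _ => ht₀ k r
  have hpt₀ : ∀ k r, p k = 0 → t k r = 0 := fun k r h =>
    (sum_eq_zero_iff_of_nonneg fun r _ => ht₀ k r).1 (hpt k ▸ h) r (mem_univ r)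
  have hgroup : ∀ k, p k * ∑ a, ∑ r, negMulLog (q k a r / p k)
      ≤ ∑ r, p k * negMulLog (t k r / p k) + p k * log I := fun k => by
    have hlog : p k * log I = ∑ r, t k r * log I := by rw [hpt k, sum_mul]
    rw [sum_comm, mul_sum, hlog, ← sum_add_distrib]
    exact sum_le_sum fun r _ =>
      mul_sum_negMulLog_div_le (by rw [card_univ]; exact hα k) (hp₀ k) fun a _ => hq k a r
  calc ∑ k, p k * ∑ a, ∑ r, negMulLog (q k a r / p k)
      ≤ ∑ k, (∑ r, p k * negMulLog (t k r / p k) + p k * log I) := sum_le_sum fun k _ => hgroup k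
    _ = ∑ r, ∑ k, p k * negMulLog (t k r / p k) + (∑ k, p k) * log I := by
        rw [sum_add_distrib, sum_comm, sum_mul]
    _ ≤ ∑ r, negMulLog (∑ k, t k r) + log I := by
        gcongr with r
        · exact sum_mul_negMulLog_div_le_negMulLog_sum univ (fun k _ => hp₀ k)
            (fun k _ => ht₀ k r) (fun k _ => hpt₀ k r) hp₁
        · exact mul_le_of_le_one_left (log_natCast_nonneg I) hp₁
    _ = log I + ∑ r, negMulLog (∑ k, ∑ a, q k a r) := add_comm _ _

end Real

namespace Matrix

lemma conjTranspose_mul_self_apply_self {m n : Type*} [Fintype m] (X : Matrix m n ℂ) (j : n) :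
    (Xᴴ * X) j j = ((∑ i, Complex.normSq (X i j) : ℝ) : ℂ) := by
  simp [mul_apply, Complex.normSq_eq_conj_mul_self]

lemma mul_conjTranspose_self_apply_self {m n : Type*} [Fintype n] (X : Matrix m n ℂ) (i : m) :
    (X * Xᴴ) i i = ((∑ j, Complex.normSq (X i j) : ℝ) : ℂ) := by
  simp [mul_apply, Complex.mul_conj]

lemma PosSemidef.exists_mul_conjTranspose_eq_self_and_conjTranspose_mul_eq_diagonal
    {𝕜 n : Type*} [RCLike 𝕜] [Fintype n] [DecidableEq n] {A : Matrix n n 𝕜}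
    (hA : A.PosSemidef) :
    ∃ X : Matrix n n 𝕜, X * Xᴴ = A ∧ Xᴴ * X = diagonal (RCLike.ofReal ∘ hA.1.eigenvalues) := by
  set U : Matrix n n 𝕜 := (hA.1.eigenvectorUnitary : Matrix n n 𝕜)
  set D : Matrix n n 𝕜 := diagonal fun i => (√(hA.1.eigenvalues i) : 𝕜)
  have hD : Dᴴ = D := by simp [D, diagonal_conjTranspose]
  have hDD : D * D = diagonal (RCLike.ofReal ∘ hA.1.eigenvalues) := by
    simp [D, ← RCLike.ofReal_mul, Real.mul_self_sqrt (hA.eigenvalues_nonneg _)]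
  refine ⟨U * D, ?_, ?_⟩
  · rw [conjTranspose_mul, hD, ← star_eq_conjTranspose, mul_assoc, ← mul_assoc D, hDD,
      ← mul_assoc]
    simpa using hA.1.spectral_theorem.symm
  · rw [conjTranspose_mul, hD, ← star_eq_conjTranspose, mul_assoc, ← mul_assoc (star U),
      Unitary.coe_star_mul_self, one_mul, hDD]

lemma sum_normSq_div_le_one_of_mul_conjTranspose_eq_diagonal {ι κ : Type*} [Fintype ι]
    [Fintype κ] [DecidableEq ι] [DecidableEq κ] {W : Matrix ι κ ℂ} {d : ι → ℝ}
    (hW : W * Wᴴ = diagonal fun i => (d i : ℂ)) (c : κ) :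
    ∑ i, Complex.normSq (W i c) / d i ≤ 1 := by
  set L : Matrix ι ι ℂ := diagonal fun i => (d i : ℂ)⁻¹
  set P : Matrix κ κ ℂ := Wᴴ * L * W
  -- The rows of `W` are orthogonal, so `P` is an orthogonal projection and `1 - P ≥ 0`.
  have hPP : P * P = P := by
    calc P * P = Wᴴ * (L * (W * Wᴴ) * L) * W := by simp only [P, Matrix.mul_assoc]
      _ = P := by
        rw [hW]
        congr 2
        simp only [L, diagonal_mul_diagonal]
        congr 1
        funext i
        simpa using mul_inv_mul_cancel (d i : ℂ)⁻¹
  have hP : Pᴴ = P := by simp [P, L, diagonal_conjTranspose, Matrix.mul_assoc, Pi.star_def]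
  have hPSD : (1 - P).PosSemidef := by
    convert posSemidef_conjTranspose_mul_self (1 - P) using 1
    rw [conjTranspose_sub, conjTranspose_one, hP, sub_mul, mul_sub, mul_sub, hPP]
    simp only [mul_one, one_mul]
    abel
  have hPcc : P c c = ((∑ i, Complex.normSq (W i c) / d i : ℝ) : ℂ) := by
    change (Wᴴ * L * W) c c = _
    rw [mul_apply]
    simp [L, mul_diagonal, Complex.normSq_eq_conj_mul_self, div_eq_mul_inv, mul_right_comm]
  have := hPSD.diag_nonneg (i := c)
  rw [sub_apply, one_apply_eq, hPcc] at this
  exact_mod_cast sub_nonneg.1 this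

lemma re_trace_sum_mul_conjTranspose {α m n : Type*} [Fintype α] [Fintype m] [Fintype n]
    (N : α → Matrix m n ℂ) :
    ((∑ a, N a * (N a)ᴴ).trace).re = ∑ a, ∑ r, ∑ s, Complex.normSq (N a s r) := by
  rw [trace_sum, Complex.re_sum]
  refine Finset.sum_congr rfl fun a _ => ?_
  rw [trace_mul_comm, trace]
  simp only [diag_apply, conjTranspose_mul_self_apply_self, Complex.re_sum, Complex.ofReal_re]

lemma trace_sum_sum_mul_mul_conjTranspose {κ m : Type*} [Fintype κ] [Fintype m]
    [DecidableEq m] {α : κ → Type*} [∀ k, Fintype (α k)] {R : Type*} [CommRing R] [StarRing R]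
    (M : (k : κ) → α k → Matrix m m R) (hM : ∑ k, ∑ i, (M k i)ᴴ * M k i = 1)
    (X : Matrix m m R) :
    (∑ k, ∑ i, M k i * X * (M k i)ᴴ).trace = X.trace := by
  calc _ = (X * ∑ k, ∑ i, (M k i)ᴴ * M k i).trace := by
        simp only [trace_sum, Matrix.mul_sum, Matrix.mul_assoc, trace_mul_comm (M _ _)]
    _ = X.trace := by rw [hM, Matrix.mul_one]

lemma sum_sum_sum_normSq_mul_apply {κ m n : Type*} [Fintype κ] [Fintype m] [DecidableEq m]
    {α : κ → Type*} [∀ k, Fintype (α k)]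
    (M : (k : κ) → α k → Matrix m m ℂ) (hM : ∑ k, ∑ i, (M k i)ᴴ * M k i = 1)
    (A : Matrix m n ℂ) (r : n) :
    ∑ k, ∑ i, ∑ s, Complex.normSq ((M k i * A) s r) = ∑ s, Complex.normSq (A s r) := by
  apply Complex.ofReal_injective
  calc ((∑ k, ∑ i, ∑ s, Complex.normSq ((M k i * A) s r) : ℝ) : ℂ)
      = (∑ k, ∑ i, (M k i * A)ᴴ * (M k i * A)) r r := by
        simp only [Matrix.sum_apply, conjTranspose_mul_self_apply_self]
        push_cast
        rfl
    _ = (Aᴴ * (∑ k, ∑ i, (M k i)ᴴ * M k i) * A) r r := by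
        simp only [conjTranspose_mul, Matrix.mul_sum, Matrix.sum_mul, Matrix.mul_assoc]
    _ = _ := by rw [hM, Matrix.mul_one, conjTranspose_mul_self_apply_self]

end Matrix

open Matrix Real in
lemma vNEntropy_mul_conjTranspose_le {n m : Type*} [Fintype n] [Fintype m] [DecidableEq n]
    (B : Matrix n m ℂ) :
    vNEntropy (B * Bᴴ) ≤ ∑ c, negMulLog (∑ s, Complex.normSq (B s c)) := by
  have hH := (posSemidef_self_mul_conjTranspose B).1
  set U : Matrix n n ℂ := (hH.eigenvectorUnitary : Matrix n n ℂ)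
  set W := star U * B
  have hWW : W * Wᴴ = diagonal fun i => (hH.eigenvalues i : ℂ) := by
    calc W * Wᴴ = star U * (B * Bᴴ) * U := by
          simp only [W, conjTranspose_mul, ← star_eq_conjTranspose (star U), star_star,
            Matrix.mul_assoc]
      _ = diagonal (Complex.ofReal ∘ hH.eigenvalues) := by
          simpa using hH.conjStarAlgAut_star_eigenvectorUnitary
  have hWB : Wᴴ * W = Bᴴ * B := by
    calc Wᴴ * W = Bᴴ * (U * star U) * B := by
          simp only [W, conjTranspose_mul, ← star_eq_conjTranspose (star U), star_star,
            Matrix.mul_assoc]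
      _ = Bᴴ * B := by rw [Unitary.mul_star_self_of_mem hH.eigenvectorUnitary.2, Matrix.mul_one]
  have hrow : ∀ i, ∑ c, Complex.normSq (W i c) = hH.eigenvalues i := fun i =>
    Complex.ofReal_injective <| (mul_conjTranspose_self_apply_self W i).symm.trans (by simp [hWW])
  have hcol : ∀ c, ∑ i, Complex.normSq (W i c) = ∑ s, Complex.normSq (B s c) := fun c =>
    Complex.ofReal_injective <| (conjTranspose_mul_self_apply_self W c).symm.trans
      (hWB ▸ conjTranspose_mul_self_apply_self B c)
  -- `|W i c|² / λᵢ` is doubly substochastic: its rows sum to `1` (or `0`), its columns to `≤ 1`.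
  rw [vNEntropy, dif_pos hH]
  simp_rw [← hcol]
  exact sum_negMulLog_le_sum_negMulLog_colSum _ _ (fun i c => Complex.normSq_nonneg _) hrow
    (sum_normSq_div_le_one_of_mul_conjTranspose_eq_diagonal hWW)

open Matrix Real in
lemma vNEntropy_smul_sum_mul_conjTranspose_le {α n m : Type*} [Fintype α] [Fintype n]
    [Fintype m] [DecidableEq n] {t : ℝ} (ht : 0 ≤ t) (N : α → Matrix n m ℂ) :
    vNEntropy ((t : ℂ) • ∑ a, N a * (N a)ᴴ)
      ≤ ∑ a, ∑ r, negMulLog (t * ∑ s, Complex.normSq (N a s r)) := by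
  set B : Matrix n (α × m) ℂ := of fun s c => (√t : ℂ) * N c.1 s c.2
  have hsqrt : (√t : ℂ) * √t = t := by rw [← Complex.ofReal_mul, mul_self_sqrt ht]
  have hB : B * Bᴴ = (t : ℂ) • ∑ a, N a * (N a)ᴴ := by
    ext s s'
    simp only [B, mul_apply, Fintype.sum_prod_type, Matrix.sum_apply, Finset.mul_sum, of_apply,
      conjTranspose_apply, Matrix.smul_apply, smul_eq_mul, star_mul', Complex.star_def,
      Complex.conj_ofReal]
    refine Finset.sum_congr rfl fun a _ => Finset.sum_congr rfl fun r _ => ?_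
    linear_combination (N a s r * (starRingEnd ℂ) (N a s' r)) * hsqrt
  have hcol : ∀ c, ∑ s, Complex.normSq (B s c) = t * ∑ s, Complex.normSq (N c.1 s c.2) := by
    intro c
    simp [B, Complex.normSq_mul, Finset.mul_sum, mul_self_sqrt ht]
  rw [← hB, ← Fintype.sum_prod_type']
  exact (vNEntropy_mul_conjTranspose_le B).trans_eq (by simp only [hcol])

/-- Average entropy after an inefficient measurement exceeds the input entropy by at most
the log-inefficiency: for a quantum instrument with Kraus operators `M_{ki}`,
`i ∈ [I(k)]`, `I(k) ≤ I`, and `∑_{k,i} M_{ki}† M_{ki} = 𝟙`, one has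
`∑_k p_k S(ρ'_{S,k}) ≤ ln I + S(ρ_S)` (sum over outcomes with `p_k > 0`). -/
theorem avg_post_measurement_entropy_le_log_inefficiency
    {n : Type*} [Fintype n] [DecidableEq n] {K I : ℕ}
    (I' : Fin K → ℕ) (hI' : ∀ k, I' k ≤ I)
    (M : (k : Fin K) → Fin (I' k) → Matrix n n ℂ)
    (hM : ∑ k, ∑ i, (M k i)ᴴ * M k i = 1)
    (ρ : Matrix n n ℂ) (hρ : ρ.PosSemidef) (hρtr : ρ.trace = 1) :
    let p : Fin K → ℝ := fun k => ((∑ i, M k i * ρ * (M k i)ᴴ).trace).re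
    ∑ k ∈ Finset.univ.filter (fun k => 0 < p k),
        p k * vNEntropy ((((p k)⁻¹ : ℝ) : ℂ) • ∑ i, M k i * ρ * (M k i)ᴴ)
      ≤ Real.log I + vNEntropy ρ := by
  intro p
  obtain ⟨A, hAA, hAtA⟩ :=
    hρ.exists_mul_conjTranspose_eq_self_and_conjTranspose_mul_eq_diagonal
  set q : (k : Fin K) → Fin (I' k) → n → ℝ := fun k i r => ∑ s, Complex.normSq ((M k i * A) s r)
  have hq₀ : ∀ k i r, 0 ≤ q k i r := fun _ _ _ =>
    Finset.sum_nonneg fun _ _ => Complex.normSq_nonneg _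
  have hkraus : ∀ k, ∑ i, M k i * ρ * (M k i)ᴴ = ∑ i, (M k i * A) * (M k i * A)ᴴ := fun k => by
    simp only [← hAA, conjTranspose_mul, Matrix.mul_assoc]
  have hp : ∀ k, p k = ∑ i, ∑ r, q k i r := fun k =>
    (congrArg (fun X => X.trace.re) (hkraus k)).trans (re_trace_sum_mul_conjTranspose _)
  have hp₀ : ∀ k, 0 ≤ p k := fun k => hp k ▸ Finset.sum_nonneg fun i _ =>
    Finset.sum_nonneg fun r _ => hq₀ k i r
  have htot : ∑ k, p k = 1 := by
    simp only [p, ← Complex.re_sum, ← trace_sum, trace_sum_sum_mul_mul_conjTranspose M hM, hρtr,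
      Complex.one_re]
  have hq : ∀ r, ∑ k, ∑ i, q k i r = hρ.1.eigenvalues r := fun r => by
    rw [sum_sum_sum_normSq_mul_apply M hM A r]
    exact Complex.ofReal_injective <|
      (conjTranspose_mul_self_apply_self A r).symm.trans (by simp [hAtA])
  calc _ ≤ ∑ k ∈ Finset.univ.filter (fun k => 0 < p k),
          p k * ∑ i, ∑ r, Real.negMulLog (q k i r / p k) := by
        refine Finset.sum_le_sum fun k _ => mul_le_mul_of_nonneg_left ?_ (hp₀ k)
        simpa only [hkraus k, inv_mul_eq_div] using
          vNEntropy_smul_sum_mul_conjTranspose_le (inv_nonneg.2 (hp₀ k)) fun i => M k i * A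
    _ = ∑ k, p k * ∑ i, ∑ r, Real.negMulLog (q k i r / p k) :=
        Finset.sum_filter_of_ne fun k _ h => (hp₀ k).lt_of_ne (left_ne_zero_of_mul h).symm
    _ ≤ Real.log I + ∑ r, Real.negMulLog (∑ k, ∑ i, q k i r) :=
        Real.sum_mul_sum_negMulLog_div_le_log_add (by simpa using hI') q hq₀ p hp htot.le
    _ = Real.log I + vNEntropy ρ := by simp only [vNEntropy, dif_pos hρ.1, hq]
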